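/- For every partial order ≼ on a nonempty set X and every equivalence relation S on X such that S ⊆ R_≼ (the equipotency relation of ≼), there exists a total preorder S-extension of ≼. -/

import Mathlib

/-!
Writing `P` for the strict part of `≼`, the relation `Q = S ∘ P ∘ S` is a strict order: if `b S c`
then `b` and `c` are indifferent to the same points, so `a P b S c P d` forces `a P d`, and
`x S a P b S x` is impossible because `a` and `b` would then be indifferent. As `Q` is saturated
with respect to `S`, it descends to a strict order on `X / S`; any linear extension of it
(Szpilrajn), pulled back to `X`, is the required total preorder.
-/

variable {X : Type*}

/-- `G` is a preorder: reflexive and transitive. -/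
def IsPreorderRel (G : Set (X × X)) : Prop :=
  (∀ x, (x, x) ∈ G) ∧ ∀ x y z, (x, y) ∈ G → (y, z) ∈ G → (x, z) ∈ G

/-- `G` is a partial order: an antisymmetric preorder. -/
def IsPartialOrderRel (G : Set (X × X)) : Prop :=
  IsPreorderRel G ∧ ∀ x y, (x, y) ∈ G → (y, x) ∈ G → x = y

/-- `G` is total. -/
def IsTotalRel (G : Set (X × X)) : Prop :=
  ∀ x y, (x, y) ∈ G ∨ (y, x) ∈ G

/-- `S` is an equivalence relation (as a set of pairs). -/
def IsEquivRel (S : Set (X × X)) : Prop :=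
  (∀ x, (x, x) ∈ S) ∧ (∀ x y, (x, y) ∈ S → (y, x) ∈ S) ∧
    ∀ x y z, (x, y) ∈ S → (y, z) ∈ S → (x, z) ∈ S

/-- The asymmetric part `P_G` of `G`. -/
def asymPart (G : Set (X × X)) : Set (X × X) :=
  {p | p ∈ G ∧ (p.2, p.1) ∉ G}

/-- The symmetric part `S_G` of `G`. -/
def symPart (G : Set (X × X)) : Set (X × X) :=
  {p | p ∈ G ∧ (p.2, p.1) ∈ G}

/-- Composition of relations: `(x, y) ∈ A ∘ B ↔ ∃ z, (x, z) ∈ A ∧ (z, y) ∈ B`. -/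
def relComp (A B : Set (X × X)) : Set (X × X) :=
  {p | ∃ z, (p.1, z) ∈ A ∧ (z, p.2) ∈ B}

/-- The indifference relation `I_G`. -/
def indiff (G : Set (X × X)) : Set (X × X) :=
  {p | p ∉ asymPart G ∧ (p.2, p.1) ∉ asymPart G}

/-- The equipotency relation `R_G`. -/
def equipot (G : Set (X × X)) : Set (X × X) :=
  {p | {z | (p.1, z) ∈ indiff G} = {z | (p.2, z) ∈ indiff G}}

/-- `T` is a total preorder `S`-extension of the partial order `pr`. -/
def IsSExtension (pr S T : Set (X × X)) : Prop :=
  IsPreorderRel T ∧ IsTotalRel T ∧ asymPart pr ⊆ asymPart T ∧ symPart T = S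

/-- `G` is acyclic: for any chain `x 0, …, x n` of `G`-related consecutive points,
`(x n, x 0) ∉ G`. -/
def IsAcyclicRel (G : Set (X × X)) : Prop :=
  ∀ (n : ℕ) (x : Fin (n + 1) → X),
    (∀ i : Fin n, (x i.castSucc, x i.succ) ∈ G) → (x (Fin.last n), x 0) ∉ G

/-- The transitive hull of `G`: the smallest transitive relation containing `G`. -/
def TransHull (G : Set (X × X)) : Set (X × X) :=
  {p | Relation.TransGen (fun a b => (a, b) ∈ G) p.1 p.2}

/-- `G` is negatively transitive: the complement of `G` is transitive. -/
def IsNegTransRel (G : Set (X × X)) : Prop :=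
  ∀ x y z, (x, y) ∉ G → (y, z) ∉ G → (x, z) ∉ G

/-- `Σ(≼)`: equivalence relations `S` with `S ∘ P_≼ ∘ S` irreflexive. -/
def SigmaCol (pr : Set (X × X)) : Set (Set (X × X)) :=
  {S | IsEquivRel S ∧ ∀ x, (x, x) ∉ relComp S (relComp (asymPart pr) S)}

/-- `Σ*(≼)`: equivalence relations `S` with `S ∘ P_≼ ∘ S` acyclic. -/
def SigmaStar (pr : Set (X × X)) : Set (Set (X × X)) :=
  {S | IsEquivRel S ∧ IsAcyclicRel (relComp S (relComp (asymPart pr) S))}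

section Comap

variable {β : Type*}

def leComap [LE β] (f : X → β) : Set (X × X) :=
  {p | f p.1 ≤ f p.2}

theorem isPreorderRel_leComap [Preorder β] (f : X → β) : IsPreorderRel (leComap f) :=
  ⟨fun _ => le_rfl, fun _ _ _ => le_trans⟩

theorem isTotalRel_leComap [LinearOrder β] (f : X → β) : IsTotalRel (leComap f) :=
  fun _ _ => le_total _ _

theorem asymPart_leComap [Preorder β] (f : X → β) :
    asymPart (leComap f) = {p | f p.1 < f p.2} := by
  ext p
  exact lt_iff_le_not_ge.symm

theorem symPart_leComap [PartialOrder β] (f : X → β) :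
    symPart (leComap f) = {p | f p.1 = f p.2} := by
  ext p
  exact le_antisymm_iff.symm

end Comap

section Saturation

variable {S Q : Set (X × X)}

def saturation (S Q : Set (X × X)) : Set (X × X) :=
  relComp S (relComp Q S)

theorem subset_saturation (hS : IsEquivRel S) : Q ⊆ saturation S Q :=
  fun p hp => ⟨p.1, hS.1 _, p.2, hp, hS.1 _⟩

theorem saturation_saturation_subset (hS : IsEquivRel S) :
    saturation S (saturation S Q) ⊆ saturation S Q := by
  rintro ⟨x, y⟩ ⟨a, hxa, b, ⟨c, hac, d, hcd, hdb⟩, hby⟩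
  exact ⟨c, hS.2.2 _ _ _ hxa hac, d, hcd, hS.2.2 _ _ _ hdb hby⟩

theorem mem_of_mem_saturation_subset (hS : IsEquivRel S) (hQ : saturation S Q ⊆ Q)
    {a b c d : X} (hab : (a, b) ∈ S) (hcd : (c, d) ∈ S) (hac : (a, c) ∈ Q) : (b, d) ∈ Q :=
  hQ ⟨a, hS.2.1 _ _ hab, c, hac, hcd⟩

end Saturation

section Quotient

variable {S Q : Set (X × X)}

def IsEquivRel.setoid (hS : IsEquivRel S) : Setoid X where
  r x y := (x, y) ∈ S
  iseqv := ⟨hS.1, hS.2.1 _ _, hS.2.2 _ _ _⟩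

def IsEquivRel.liftRel (hS : IsEquivRel S) (hQ : saturation S Q ⊆ Q) :
    Quotient hS.setoid → Quotient hS.setoid → Prop :=
  Quotient.lift₂ (fun x y => (x, y) ∈ Q) fun _ _ _ _ ha hb =>
    propext ⟨mem_of_mem_saturation_subset hS hQ ha hb,
      mem_of_mem_saturation_subset hS hQ (hS.2.1 _ _ ha) (hS.2.1 _ _ hb)⟩

theorem IsEquivRel.isStrictOrder_liftRel (hS : IsEquivRel S) (hQ : saturation S Q ⊆ Q)
    (hirr : ∀ x, (x, x) ∉ Q) (htrans : ∀ x y z, (x, y) ∈ Q → (y, z) ∈ Q → (x, z) ∈ Q) :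
    IsStrictOrder _ (hS.liftRel hQ) where
  irrefl := Quotient.ind hirr
  trans := by
    rintro ⟨x⟩ ⟨y⟩ ⟨z⟩
    exact htrans x y z

theorem IsEquivRel.exists_totalPreorder (hS : IsEquivRel S) (hQ : saturation S Q ⊆ Q)
    (hirr : ∀ x, (x, x) ∉ Q) (htrans : ∀ x y z, (x, y) ∈ Q → (y, z) ∈ Q → (x, z) ∈ Q) :
    ∃ T : Set (X × X), IsPreorderRel T ∧ IsTotalRel T ∧ Q ⊆ asymPart T ∧ symPart T = S := by
  have := hS.isStrictOrder_liftRel hQ hirr htrans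
  let _ := partialOrderOfSO (hS.liftRel hQ)
  have hmono : StrictMono (toLinearExtension : Quotient hS.setoid → _) :=
    toLinearExtension.monotone.strictMono_of_injective fun _ _ => id
  let f : X → LinearExtension (Quotient hS.setoid) := fun x => toLinearExtension ⟦x⟧
  refine ⟨leComap f, isPreorderRel_leComap f, isTotalRel_leComap f, ?_, ?_⟩
  · rw [asymPart_leComap]
    exact fun _ hp => hmono hp
  · rw [symPart_leComap]
    ext p
    exact Quotient.eq (r := hS.setoid)

end Quotient

section Equipotency

variable {G : Set (X × X)}

theorem mem_indiff_self (G : Set (X × X)) (x : X) : (x, x) ∈ indiff G :=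
  ⟨fun h => h.2 h.1, fun h => h.2 h.1⟩

theorem mem_indiff_iff_of_mem_equipot {x y : X} (h : (x, y) ∈ equipot G) (z : X) :
    (x, z) ∈ indiff G ↔ (y, z) ∈ indiff G :=
  Set.ext_iff.mp h z

theorem mem_indiff_of_mem_equipot {x y : X} (h : (x, y) ∈ equipot G) : (x, y) ∈ indiff G :=
  (mem_indiff_iff_of_mem_equipot h y).mpr (mem_indiff_self G y)

theorem asymPart_trans (hG : ∀ x y z, (x, y) ∈ G → (y, z) ∈ G → (x, z) ∈ G) {x y z : X}
    (hxy : (x, y) ∈ asymPart G) (hyz : (y, z) ∈ asymPart G) : (x, z) ∈ asymPart G :=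
  ⟨hG _ _ _ hxy.1 hyz.1, fun hzx => hyz.2 (hG _ _ _ hzx hxy.1)⟩

theorem asymPart_trans_of_mem_equipot (hG : ∀ x y z, (x, y) ∈ G → (y, z) ∈ G → (x, z) ∈ G)
    {a b c d : X} (hab : (a, b) ∈ asymPart G) (hbc : (b, c) ∈ equipot G)
    (hcd : (c, d) ∈ asymPart G) : (a, d) ∈ asymPart G := by
  by_cases hbd : (b, d) ∈ asymPart G
  · exact asymPart_trans hG hab hbd
  · have hdb : (d, b) ∈ asymPart G := by_contra fun hdb =>
      ((mem_indiff_iff_of_mem_equipot hbc d).mp ⟨hbd, hdb⟩).1 hcd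
    exact absurd (asymPart_trans hG hcd hdb) (mem_indiff_of_mem_equipot hbc).2

variable {S : Set (X × X)}

theorem notMem_saturation_asymPart_self (hS : IsEquivRel S) (hsub : S ⊆ equipot G) (x : X) :
    (x, x) ∉ saturation S (asymPart G) := by
  rintro ⟨a, hxa, b, hab, hbx⟩
  exact (mem_indiff_of_mem_equipot (hsub (hS.2.2 _ _ _ hbx hxa))).2 hab

theorem saturation_asymPart_trans (hG : ∀ x y z, (x, y) ∈ G → (y, z) ∈ G → (x, z) ∈ G)
    (hS : IsEquivRel S) (hsub : S ⊆ equipot G) (x y z : X)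
    (hxy : (x, y) ∈ saturation S (asymPart G)) (hyz : (y, z) ∈ saturation S (asymPart G)) :
    (x, z) ∈ saturation S (asymPart G) := by
  obtain ⟨a, hxa, b, hab, hby⟩ := hxy
  obtain ⟨c, hyc, d, hcd, hdz⟩ := hyz
  exact ⟨a, hxa, d, asymPart_trans_of_mem_equipot hG hab (hsub (hS.2.2 _ _ _ hby hyc)) hcd, hdz⟩

end Equipotency

theorem exists_S_extension_of_subset_equipot_general (pr S : Set (X × X))
    (hpr : IsPartialOrderRel pr) (hS : IsEquivRel S) (hsub : S ⊆ equipot pr) :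
    ∃ T : Set (X × X), IsSExtension pr S T := by
  obtain ⟨T, hT, htot, hQT, hST⟩ := hS.exists_totalPreorder (saturation_saturation_subset hS)
    (notMem_saturation_asymPart_self hS hsub) (saturation_asymPart_trans hpr.1.2 hS hsub)
  exact ⟨T, hT, htot, (subset_saturation hS).trans hQT, hST⟩

theorem exists_S_extension_of_subset_equipot [Nonempty X] (pr S : Set (X × X))
    (hpr : IsPartialOrderRel pr) (hS : IsEquivRel S) (hsub : S ⊆ equipot pr) :
    ∃ T : Set (X × X), IsSExtension pr S T :=
  exists_S_extension_of_subset_equipot_general pr S hpr hS hsub
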